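/- arXiv:2111.01259 — 2 statements merged into one kernel-verified Lean document; each statement's English description precedes it below -/
import Mathlib

section
/- Let w ∈ ℝⁿ and A ∈ ℝ^{n×n}. Suppose there exists a (possibly complex) eigenvector v ∈ ℂⁿ of A with eigenvalue λ ∈ ℂ such that |λ| ≥ 1, ‖v‖ = 1, and vᵀw ≠ 0. Then there exists a constant c > 0 such that for every ς ∈ ℕ, max{ wᵀ A^ς κ : κ ∈ ℝⁿ, ‖κ‖ ≤ 1 } ≥ c. In fact one may take c = |wᵀv| / √2. -/
open Matrix

/-- If `A` has a complex eigenvector `v` with `|λ| ≥ 1`, `‖v‖ = 1` and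
`vᵀw ≠ 0`, then `max{wᵀA^ς κ : ‖κ‖ ≤ 1} ≥ c := |wᵀv|/√2 > 0` for every `ς`. -/
theorem stmt_7 {n : ℕ} (A : Matrix (Fin n) (Fin n) ℝ) (w : Fin n → ℝ)
    (v : EuclideanSpace ℂ (Fin n)) (lam : ℂ)
    (heig : (A.map (Complex.ofReal)).mulVec v = lam • (v : Fin n → ℂ))
    (hlam : 1 ≤ ‖lam‖) (hv : ‖v‖ = 1)
    (hwv : (∑ i, (w i : ℂ) * v i) ≠ 0) :
    0 < ‖(∑ i, (w i : ℂ) * v i)‖ / Real.sqrt 2 ∧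
      ∀ ς : ℕ, ∃ κ : EuclideanSpace ℝ (Fin n), ‖κ‖ ≤ 1 ∧
        ‖(∑ i, (w i : ℂ) * v i)‖ / Real.sqrt 2 ≤
          w ⬝ᵥ (A ^ ς).mulVec κ := by
  set c := ‖(∑ i, (w i : ℂ) * v i)‖ with hc_def
  have hc : 0 < c := norm_pos_iff.mpr hwv
  have hs2 : (0:ℝ) < Real.sqrt 2 := by positivity
  refine ⟨div_pos hc hs2, fun ς => ?_⟩
  -- eigenvector of the power
  have key : ∀ k : ℕ, (A.map Complex.ofReal) ^ k *ᵥ v = lam ^ k • (v : Fin n → ℂ) := by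
    intro k
    induction k with
    | zero => simp [Matrix.one_mulVec]
    | succ k ih =>
        rw [pow_succ', ← Matrix.mulVec_mulVec, ih, Matrix.mulVec_smul, heig, smul_smul, ← pow_succ]
  have hpow : ((A ^ ς).map (Complex.ofReal)).mulVec v = (lam ^ ς) • (v : Fin n → ℂ) := by
    have hmap : (A ^ ς).map Complex.ofReal = (A.map Complex.ofReal) ^ ς := by
      exact map_pow (Complex.ofRealHom.mapMatrix) A ς
    rw [hmap, key]
  -- real and imaginary parts of v
  set vR : EuclideanSpace ℝ (Fin n) := WithLp.toLp 2 (fun i => (v i).re) with hvR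
  set vI : EuclideanSpace ℝ (Fin n) := WithLp.toLp 2 (fun i => (v i).im) with hvI
  set z : ℂ := lam ^ ς * ∑ i, (w i : ℂ) * v i with hz
  have hzre : z.re = w ⬝ᵥ (A ^ ς).mulVec vR ∧ z.im = w ⬝ᵥ (A ^ ς).mulVec vI := by
    have hzsum : z = ∑ i, (w i : ℂ) * (((A ^ ς).map (Complex.ofReal)).mulVec v i) := by
      rw [hpow]
      simp only [hz, Finset.mul_sum]
      congr 1; ext i
      show lam ^ ς * ((w i : ℂ) * v i) = (w i : ℂ) * (lam ^ ς * v i)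
      ring
    constructor <;>
    · rw [hzsum]
      simp [hvR, hvI, Matrix.mulVec, dotProduct, Matrix.map_apply, Complex.re_sum,
        Complex.im_sum, Complex.mul_re, Complex.mul_im, Finset.mul_sum]
  -- norms of real and imaginary parts
  have hnorm : ∀ u : EuclideanSpace ℝ (Fin n), (∀ i, (u i)^2 ≤ ‖v i‖ ^ 2) →
      ‖u‖ ≤ 1 := by
    intro u hu
    have h1 : ‖u‖ ≤ ‖v‖ := by
      rw [EuclideanSpace.norm_eq, EuclideanSpace.norm_eq]
      apply Real.sqrt_le_sqrt
      apply Finset.sum_le_sum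
      intro i _
      simpa [Real.norm_eq_abs, sq_abs] using hu i
    simpa [hv] using h1
  have hvRnorm : ‖vR‖ ≤ 1 := by
    apply hnorm
    intro i
    rw [Complex.sq_norm, Complex.normSq_apply]
    nlinarith [sq_nonneg (v i).im, sq_nonneg (v i).re]
  have hvInorm : ‖vI‖ ≤ 1 := by
    apply hnorm
    intro i
    rw [Complex.sq_norm, Complex.normSq_apply]
    nlinarith [sq_nonneg (v i).im, sq_nonneg (v i).re]
  -- |z| ≥ c
  have habs : c ≤ ‖z‖ := by
    have h1 : ‖z‖ = ‖lam‖ ^ ς * c := by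
      rw [hz, norm_mul, norm_pow]
    have h2 : 1 ≤ ‖lam‖ ^ ς := one_le_pow₀ (by simpa using hlam)
    nlinarith [hc]
  have hsq : c ^ 2 ≤ z.re ^ 2 + z.im ^ 2 := by
    have h3 := Complex.sq_norm z
    rw [Complex.normSq_apply] at h3
    nlinarith [habs, hc.le, norm_nonneg z]
  -- dot product is homogeneous
  have hsmul : ∀ (s : ℝ) (u : EuclideanSpace ℝ (Fin n)),
      w ⬝ᵥ (A ^ ς).mulVec (s • u) = s * (w ⬝ᵥ (A ^ ς).mulVec u) := by
    intro s u
    rw [Matrix.mulVec_smul, dotProduct_smul, smul_eq_mul]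
  have habs1 : ∀ t : ℝ, |(if 0 ≤ t then (1:ℝ) else -1)| = 1 := by
    intro t; split <;> simp
  -- choose the better of the two coordinates
  rcases le_total (z.im ^ 2) (z.re ^ 2) with h | h
  · refine ⟨(if 0 ≤ z.re then (1:ℝ) else -1) • vR, ?_, ?_⟩
    · rw [norm_smul]
      calc ‖(if 0 ≤ z.re then (1:ℝ) else -1)‖ * ‖vR‖ = ‖vR‖ := by
            rw [Real.norm_eq_abs, habs1, one_mul]
        _ ≤ 1 := hvRnorm
    · have hval : w ⬝ᵥ (A ^ ς).mulVec ((if 0 ≤ z.re then (1:ℝ) else -1) • vR) = |z.re| := by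
        rw [hsmul, ← hzre.1]
        split
        · rw [abs_of_nonneg ‹_›, one_mul]
        · rw [abs_of_neg (lt_of_not_ge ‹_›)]; ring
      rw [WithLp.ofLp_smul, hval, div_le_iff₀ hs2]
      have ht : 0 ≤ |z.re| * Real.sqrt 2 := by positivity
      calc c = Real.sqrt (c^2) := (Real.sqrt_sq hc.le).symm
        _ ≤ Real.sqrt ((|z.re| * Real.sqrt 2)^2) := Real.sqrt_le_sqrt (by
            nlinarith [Real.sq_sqrt (by norm_num : (0:ℝ) ≤ 2), sq_abs z.re])
        _ = |z.re| * Real.sqrt 2 := Real.sqrt_sq ht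
  · refine ⟨(if 0 ≤ z.im then (1:ℝ) else -1) • vI, ?_, ?_⟩
    · rw [norm_smul]
      calc ‖(if 0 ≤ z.im then (1:ℝ) else -1)‖ * ‖vI‖ = ‖vI‖ := by
            rw [Real.norm_eq_abs, habs1, one_mul]
        _ ≤ 1 := hvInorm
    · have hval : w ⬝ᵥ (A ^ ς).mulVec ((if 0 ≤ z.im then (1:ℝ) else -1) • vI) = |z.im| := by
        rw [hsmul, ← hzre.2]
        split
        · rw [abs_of_nonneg ‹_›, one_mul]
        · rw [abs_of_neg (lt_of_not_ge ‹_›)]; ring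
      rw [WithLp.ofLp_smul, hval, div_le_iff₀ hs2]
      have ht : 0 ≤ |z.im| * Real.sqrt 2 := by positivity
      calc c = Real.sqrt (c^2) := (Real.sqrt_sq hc.le).symm
        _ ≤ Real.sqrt ((|z.im| * Real.sqrt 2)^2) := Real.sqrt_le_sqrt (by
            nlinarith [Real.sq_sqrt (by norm_num : (0:ℝ) ≤ 2), sq_abs z.im])
        _ = |z.im| * Real.sqrt 2 := Real.sqrt_sq ht
end

section
/- Let (Aʳ)_{r=0}^m be matrices in ℝ^{a×n} and a⁰ ∈ ℝ^a, and assume the tuple is extendable: for all u₀,…,u_m with Σ_{r=0}^m Aʳu_r ≤ a⁰ there exists u_{m+1} with Σ_{r=0}^m Aʳu_{r+1} ≤ a⁰. Then for any finite sequence d₀,…,d_{n+1} ∈ ℝⁿ (n ≥ m−1) satisfying Σ_{r=0}^m Aʳ d_{k−m+r} ≤ a⁰ for all k = m,…,n+1, there exists an infinite signal d : ℕ → ℝⁿ with d(k) = d_k for k = 0,…,n+1 and Σ_{r=0}^m Aʳ d(k−m+r) ≤ a⁰ for all k ≥ m. -/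
open Matrix

/-- An extendable tuple of assumption inequalities allows extending any
finite admissible sequence of inputs to an infinite admissible signal. -/
theorem stmt_17 {a nd m : ℕ}
    (A : Fin (m + 1) → Matrix (Fin a) (Fin nd) ℝ) (a₀ : Fin a → ℝ)
    (hext : ∀ u : Fin (m + 1) → Fin nd → ℝ,
        (∑ r : Fin (m + 1), (A r).mulVec (u r)) ≤ a₀ →
        ∃ w : Fin nd → ℝ,
          (∑ r : Fin (m + 1),
            (A r).mulVec ((Fin.snoc (fun i : Fin m => u i.succ) w :
              Fin (m + 1) → Fin nd → ℝ) r)) ≤ a₀)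
    (n : ℕ) (hn : m ≤ n + 1) (d : ℕ → Fin nd → ℝ)
    (hd : ∀ k : ℕ, m ≤ k → k ≤ n + 1 →
        (∑ r : Fin (m + 1), (A r).mulVec (d (k - m + (r : ℕ)))) ≤ a₀) :
    ∃ d' : ℕ → Fin nd → ℝ,
      (∀ k ≤ n + 1, d' k = d k) ∧
      ∀ k : ℕ, m ≤ k →
        (∑ r : Fin (m + 1), (A r).mulVec (d' (k - m + (r : ℕ)))) ≤ a₀ := by
  classical
  let F : ∀ k : ℕ, (∀ j, j < k → Fin nd → ℝ) → Fin nd → ℝ := fun k prev =>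
    if h : k ≤ n + 1 then d k
    else
      let u : Fin (m + 1) → Fin nd → ℝ := fun r =>
        prev (k - 1 - m + r) (by have := r.isLt; omega)
      if hc : (∑ r : Fin (m + 1), (A r).mulVec (u r)) ≤ a₀ then
        Classical.choose (hext u hc)
      else 0
  let d' : ℕ → Fin nd → ℝ := fun k => Nat.lt_wfRel.wf.fix F k
  have heq : ∀ k, d' k = F k (fun j _ => d' j) := fun k =>
    WellFounded.fix_eq Nat.lt_wfRel.wf F k
  have hagree : ∀ k ≤ n + 1, d' k = d k := by
    intro k hk
    rw [heq k]
    simp only [F, dif_pos hk]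
  refine ⟨d', hagree, ?_⟩
  intro k hk
  induction k using Nat.strong_induction_on with
  | _ k ih =>
    by_cases hkn : k ≤ n + 1
    · have : ∀ r : Fin (m + 1), d' (k - m + (r : ℕ)) = d (k - m + (r : ℕ)) := by
        intro r
        exact hagree _ (by have := r.isLt; omega)
      simp only [this]
      exact hd k hk hkn
    · -- k > n+1, use the recursion
      have hk1 : m ≤ k - 1 := by omega
      have hprev := ih (k - 1) (by omega) hk1
      set u : Fin (m + 1) → Fin nd → ℝ := fun r => d' (k - 1 - m + (r : ℕ)) with hu
      have hc : (∑ r : Fin (m + 1), (A r).mulVec (u r)) ≤ a₀ := hprev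
      set w : Fin nd → ℝ := Classical.choose (hext u hc) with hw
      have hspec : (∑ r : Fin (m + 1),
          (A r).mulVec ((Fin.snoc (fun i : Fin m => u i.succ) w :
            Fin (m + 1) → Fin nd → ℝ) r)) ≤ a₀ := Classical.choose_spec (hext u hc)
      have hdk : d' k = w := by
        rw [heq k]
        simp only [F, dif_neg hkn]
        exact dif_pos hc
      have hsum : (∑ r : Fin (m + 1), (A r).mulVec (d' (k - m + (r : ℕ)))) =
          ∑ r : Fin (m + 1), (A r).mulVec ((Fin.snoc (fun i : Fin m => u i.succ) w :
            Fin (m + 1) → Fin nd → ℝ) r) := by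
        refine Finset.sum_congr rfl fun r _ => ?_
        induction r using Fin.lastCases with
        | last =>
          simp only [Fin.snoc_last, Fin.val_last]
          rw [show k - m + m = k by omega, hdk]
        | cast i =>
          simp only [Fin.snoc_castSucc, hu, Fin.coe_castSucc, Fin.val_succ]
          have hi := i.isLt
          have : k - 1 - m + ((i : ℕ) + 1) = k - m + (i : ℕ) := by omega
          rw [this]
      rw [hsum]
      exact hspec
end
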